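/- arXiv:1603.09205 — 2 statements merged into one kernel-verified Lean document; each statement's English description precedes it below -/
import Mathlib

section
/- The vertex sets of the maximal reciprocal pointer chains form a partition of V into pairwise disjoint nonempty subsets, and the number of blocks of this partition equals |Λ|, the number of distinct cascading via-paths. -/
variable {V : Type*}

/-- `p` is a path from `u` to `w` in the digraph with edge relation `E`:
a nonempty finite sequence of vertices beginning at `u` and ending at `w`
in which every consecutive pair of vertices is an edge. -/
def IsPath (E : V → V → Prop) (p : List V) (u w : V) : Prop :=
  p ≠ [] ∧ p.head? = some u ∧ p.getLast? = some w ∧ p.Chain' E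

/-- The cost of a path: the sum of the weights of its edges. -/
def pathCost (c : V → V → ℝ) (p : List V) : ℝ :=
  ((p.zip p.tail).map fun e => c e.1 e.2).sum

/-- A shortest path from `u` to `w`: a path from `u` to `w` of minimum cost. -/
def IsShortestPath (E : V → V → Prop) (c : V → V → ℝ) (p : List V) (u w : V) : Prop :=
  IsPath E p u w ∧ ∀ q, IsPath E q u w → pathCost c p ≤ pathCost c q

/-- A via-path for `v`: an `s`–`t` path of minimum cost among all `s`–`t`
paths passing through `v`. -/
def IsViaPath (E : V → V → Prop) (c : V → V → ℝ) (s t v : V) (p : List V) : Prop :=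
  IsPath E p s t ∧ v ∈ p ∧ ∀ q, IsPath E q s t → v ∈ q → pathCost c p ≤ pathCost c q

/-- The minimum cost of an `s`–`t` path passing through `v`. -/
noncomputable def viaCost (E : V → V → Prop) (c : V → V → ℝ) (s t v : V) : ℝ :=
  sInf (pathCost c '' {p | IsPath E p s t ∧ v ∈ p})

/-- A predecessor shortest path tree rooted at the source `s`: a map `b`
assigning to each vertex `v ≠ s` a vertex `b v` with an edge from `b v` to `v`,
such that iterating `b` from any `v` terminates at `s` and the resulting path
`pathTo v` (read from `s` to `v`) is a shortest path from `s` to `v`. -/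
structure PredSPT (E : V → V → Prop) (c : V → V → ℝ) (s : V) where
  b : V → V
  pathTo : V → List V
  edge : ∀ v, v ≠ s → E (b v) v
  pathTo_src : pathTo s = [s]
  pathTo_step : ∀ v, v ≠ s → pathTo v = pathTo (b v) ++ [v]
  shortest : ∀ v, IsShortestPath E c (pathTo v) s v

/-- A successor shortest path tree rooted at the target `t`: a map `f`
assigning to each vertex `v ≠ t` a vertex `f v` with an edge from `v` to `f v`,
such that iterating `f` from any `v` terminates at `t` and the resulting path
`pathFrom v` is a shortest path from `v` to `t`. -/
structure SuccSPT (E : V → V → Prop) (c : V → V → ℝ) (t : V) where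
  f : V → V
  pathFrom : V → List V
  edge : ∀ v, v ≠ t → E v (f v)
  pathFrom_tgt : pathFrom t = [t]
  pathFrom_step : ∀ v, v ≠ t → pathFrom v = v :: pathFrom (f v)
  shortest : ∀ v, IsShortestPath E c (pathFrom v) v t

variable {E : V → V → Prop} {c : V → V → ℝ} {s t : V}

/-- The cascading via-path (CVP) of a vertex `v`: the tree path `p̃_{s,v}`
followed by the tree path `p̃_{v,t}`. -/
def CVP (B : PredSPT E c s) (F : SuccSPT E c t) (v : V) : List V :=
  B.pathTo v ++ (F.pathFrom v).tail

/-- A reciprocal pointer chain (RPC): a nonempty sequence of vertices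
`(v_1, …, v_n)` such that for all `1 ≤ i < n`, `b (v_{i+1}) = v_i` and
`f (v_i) = v_{i+1}` (as pointers of the two shortest path trees, so in
particular `v_{i+1} ≠ s` and `v_i ≠ t`). -/
def IsRPC (B : PredSPT E c s) (F : SuccSPT E c t) (r : List V) : Prop :=
  r ≠ [] ∧ r.Chain' fun x y => y ≠ s ∧ x ≠ t ∧ B.b y = x ∧ F.f x = y

/-- A maximal RPC: an RPC whose set of vertices is not a (strict) subset of the
vertex set of any other RPC. -/
def IsMaximalRPC [DecidableEq V] (B : PredSPT E c s) (F : SuccSPT E c t)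
    (r : List V) : Prop :=
  IsRPC B F r ∧
    ∀ r', IsRPC B F r' → r.toFinset ⊆ r'.toFinset → r'.toFinset = r.toFinset

/-- The Jaccard distance between the vertex sets of two paths. -/
noncomputable def jaccardDist [DecidableEq V] (p q : List V) : ℝ :=
  1 - ((p.toFinset ∩ q.toFinset).card : ℝ) / ((p.toFinset ∪ q.toFinset).card : ℝ)

/-- A plateau: a nonempty sequence of vertices in which every consecutive pair
is an edge and all vertices have the same minimum via-path cost. -/
def IsPlateau (E : V → V → Prop) (c : V → V → ℝ) (s t : V) (q : List V) : Prop :=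
  q ≠ [] ∧ q.Chain' fun x y => E x y ∧ viaCost E c s t x = viaCost E c s t y

/-- A maximal plateau: a plateau whose set of vertices is not a (strict) subset
of the vertex set of any other plateau. -/
def IsMaximalPlateau [DecidableEq V] (E : V → V → Prop) (c : V → V → ℝ)
    (s t : V) (q : List V) : Prop :=
  IsPlateau E c s t q ∧
    ∀ q', IsPlateau E c s t q' → q.toFinset ⊆ q'.toFinset → q'.toFinset = q.toFinset

/-!
Along a reciprocal pointer link `x → y` the tree paths satisfy `p̃_{s,y} = p̃_{s,x} ++ [y]` and
`p̃_{x,t} = x :: p̃_{y,t}`, so linked vertices have the same CVP. Conversely, if `x` and `y` have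
the same CVP and `x` is no deeper than `y` in the predecessor tree, the piece of that common path
from `x` to `y` is at once a prefix of `p̃_{x,t}` and a suffix of `p̃_{s,y}`, hence an RPC.
So the maximal RPCs are exactly the fibres of `v ↦ p̃_{s,v,t}`: they partition `V` and are in
bijection with `Λ`.
-/

open Relation

theorem List.IsChain.and {α : Type*} {R S : α → α → Prop} {l : List α} (hR : l.IsChain R)
    (hS : l.IsChain S) : l.IsChain fun a b => R a b ∧ S a b :=
  List.isChain_iff_getElem.2 fun i hi =>
    ⟨List.isChain_iff_getElem.1 hR i hi, List.isChain_iff_getElem.1 hS i hi⟩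

namespace PredSPT

variable (B : PredSPT E c s)

theorem induction {motive : V → Prop} (src : motive s)
    (step : ∀ v, v ≠ s → motive (B.b v) → motive v) (v : V) : motive v := by
  by_cases hv : v = s
  · exact hv ▸ src
  · exact step v hv (induction src step (B.b v))
termination_by (B.pathTo v).length
decreasing_by simp [B.pathTo_step v hv]

theorem dropLast_pathTo_append (v : V) : (B.pathTo v).dropLast ++ [v] = B.pathTo v :=
  List.dropLast_append_getLast? v (B.shortest v).1.2.2.1

theorem isChain_pathTo (v : V) : (B.pathTo v).IsChain fun x y => y ≠ s ∧ B.b y = x := by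
  induction v using B.induction with
  | src => simp [B.pathTo_src]
  | step v hv ih =>
    rw [B.pathTo_step v hv]
    refine List.isChain_append.2 ⟨ih, .singleton _, fun x hx y hy => ?_⟩
    rw [(B.shortest _).1.2.2.1] at hx
    simp_all

end PredSPT

namespace SuccSPT

variable (F : SuccSPT E c t)

theorem induction {motive : V → Prop} (tgt : motive t)
    (step : ∀ v, v ≠ t → motive (F.f v) → motive v) (v : V) : motive v := by
  by_cases hv : v = t
  · exact hv ▸ tgt
  · exact step v hv (induction tgt step (F.f v))
termination_by (F.pathFrom v).length
decreasing_by simp [F.pathFrom_step v hv]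

theorem pathFrom_eq_cons_tail (v : V) : F.pathFrom v = v :: (F.pathFrom v).tail := by
  obtain ⟨tl, htl⟩ := List.head?_eq_some_iff.1 (F.shortest v).1.2.1
  simp [htl]

theorem isChain_pathFrom (v : V) : (F.pathFrom v).IsChain fun x y => x ≠ t ∧ F.f x = y := by
  induction v using F.induction with
  | tgt => simp [F.pathFrom_tgt]
  | step v hv ih =>
    rw [F.pathFrom_step v hv]
    refine List.isChain_cons.2 ⟨fun y hy => ?_, ih⟩
    rw [(F.shortest _).1.2.1] at hy
    simp_all

end SuccSPT

section RPC

variable (B : PredSPT E c s) (F : SuccSPT E c t)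

def RPCLink (x y : V) : Prop := y ≠ s ∧ x ≠ t ∧ B.b y = x ∧ F.f x = y

variable {B F}

theorem CVP_eq_of_rpcLink {x y : V} (h : RPCLink B F x y) : CVP B F x = CVP B F y := by
  obtain ⟨hys, hxt, hb, hf⟩ := h
  rw [CVP, CVP, B.pathTo_step y hys, F.pathFrom_step x hxt, hb, hf]
  simp [← F.pathFrom_eq_cons_tail]

theorem mem_CVP_self (v : V) : v ∈ CVP B F v :=
  List.mem_append_left _ (List.mem_of_mem_getLast? (B.shortest v).1.2.2.1)

theorem IsRPC.CVP_eq {r : List V} (hr : IsRPC B F r) {x y : V} (hx : x ∈ r) (hy : y ∈ r) :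
    CVP B F x = CVP B F y := by
  have key : ∀ u ∈ r, CVP B F u = CVP B F (r.head hr.1) :=
    hr.2.induction _ _ (fun a b hab ha => (CVP_eq_of_rpcLink hab).symm.trans ha) fun _ => rfl
  exact (key x hx).trans (key y hy).symm

theorem reflTransGen_rpcLink_of_CVP_eq {x y : V} (h : CVP B F x = CVP B F y)
    (hle : (B.pathTo x).length ≤ (B.pathTo y).length) : ReflTransGen (RPCLink B F) x y := by
  obtain ⟨m, hm⟩ : B.pathTo x <+: B.pathTo y :=
    List.prefix_of_prefix_length_le (List.prefix_append _ (F.pathFrom x).tail)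
      (by rw [← CVP, h]; exact List.prefix_append _ _) hle
  have htail : (F.pathFrom x).tail = m ++ (F.pathFrom y).tail := by
    rw [CVP, CVP, ← hm, List.append_assoc] at h
    exact List.append_cancel_left h
  have hsuffix : (B.pathTo x).dropLast ++ x :: m = B.pathTo y := by
    rw [← hm, ← B.dropLast_pathTo_append x]; simp
  have hfwd : (x :: m).IsChain fun a b => a ≠ t ∧ F.f a = b :=
    (F.isChain_pathFrom x).prefix
      ⟨(F.pathFrom y).tail, by rw [F.pathFrom_eq_cons_tail x, htail]; simp⟩
  have hback : (x :: m).IsChain fun a b => b ≠ s ∧ B.b b = a :=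
    (B.isChain_pathTo y).suffix ⟨_, hsuffix⟩
  refine List.relationReflTransGen_of_exists_isChain_cons _
    ((hfwd.and hback).imp fun a b h => ⟨h.2.1, h.1.1, h.2.2, h.1.2⟩) ?_
  simpa [← hsuffix, List.getLast?_eq_some_getLast] using (B.shortest y).1.2.2.1

theorem exists_isChain_rpcLink_append_singleton (v : V) :
    ∃ l, (l ++ [v]).IsChain (RPCLink B F) ∧
      ∀ u, ReflTransGen (RPCLink B F) u v → u ∈ l ++ [v] := by
  induction v using B.induction with
  | src =>
    refine ⟨[], .singleton _, fun u hu => ?_⟩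
    rcases hu.cases_tail with rfl | ⟨w, -, hw⟩
    · simp
    · exact absurd rfl hw.1
  | step v hv ih =>
    obtain ⟨l, hl, hmem⟩ := ih
    by_cases hlink : RPCLink B F (B.b v) v
    · refine ⟨l ++ [B.b v], List.isChain_append.2 ⟨hl, .singleton _, by simpa using hlink⟩,
        fun u hu => ?_⟩
      rcases hu.cases_tail with rfl | ⟨w, huw, hw⟩
      · simp
      · rw [← hw.2.2.1] at huw
        exact List.mem_append_left _ (hmem u huw)
    · refine ⟨[], .singleton _, fun u hu => ?_⟩
      rcases hu.cases_tail with rfl | ⟨w, -, hw⟩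
      · simp
      · exact absurd (hw.2.2.1 ▸ hw) hlink

theorem exists_isChain_rpcLink_cons (v : V) :
    ∃ l, (v :: l).IsChain (RPCLink B F) ∧ ∀ u, ReflTransGen (RPCLink B F) v u → u ∈ v :: l := by
  induction v using F.induction with
  | tgt =>
    refine ⟨[], .singleton _, fun u hu => ?_⟩
    rcases hu.cases_head with rfl | ⟨w, hw, -⟩
    · simp
    · exact absurd rfl hw.2.1
  | step v hv ih =>
    obtain ⟨l, hl, hmem⟩ := ih
    by_cases hlink : RPCLink B F v (F.f v)
    · refine ⟨F.f v :: l, hl.cons_cons hlink, fun u hu => ?_⟩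
      rcases hu.cases_head with rfl | ⟨w, hw, hwu⟩
      · simp
      · rw [← hw.2.2.2] at hwu
        exact List.mem_cons_of_mem _ (hmem u hwu)
    · refine ⟨[], .singleton _, fun u hu => ?_⟩
      rcases hu.cases_head with rfl | ⟨w, hw, -⟩
      · simp
      · exact absurd (hw.2.2.2 ▸ hw) hlink

variable (B F) in
def cvpFiber [DecidableEq V] (p : List V) : Finset V :=
  p.toFinset.filter fun u => CVP B F u = p

theorem mem_cvpFiber [DecidableEq V] {p : List V} {u : V} :
    u ∈ cvpFiber B F p ↔ CVP B F u = p := by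
  simp only [cvpFiber, Finset.mem_filter, List.mem_toFinset, and_iff_right_iff_imp]
  rintro rfl
  exact mem_CVP_self u

theorem exists_isRPC_toFinset_eq_cvpFiber [DecidableEq V] (v : V) :
    ∃ r, IsRPC B F r ∧ r.toFinset = cvpFiber B F (CVP B F v) := by
  obtain ⟨l, hl, hback⟩ := exists_isChain_rpcLink_append_singleton (B := B) (F := F) v
  obtain ⟨l', hl', hfwd⟩ := exists_isChain_rpcLink_cons (B := B) (F := F) v
  have hr : IsRPC B F (l ++ [v] ++ l') :=
    ⟨by simp, hl.append_overlap (by simpa using hl') (List.cons_ne_nil _ _)⟩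
  refine ⟨_, hr, Finset.ext fun u => ?_⟩
  rw [List.mem_toFinset, mem_cvpFiber]
  refine ⟨fun hu => hr.CVP_eq hu (by simp), fun hu => ?_⟩
  rcases le_total (B.pathTo u).length (B.pathTo v).length with hle | hle
  · exact List.mem_append_left _ (hback u (reflTransGen_rpcLink_of_CVP_eq hu hle))
  · have := hfwd u (reflTransGen_rpcLink_of_CVP_eq hu.symm hle)
    simp_all

theorem setOf_isMaximalRPC_toFinset_eq [DecidableEq V] :
    {S | ∃ r, IsMaximalRPC B F r ∧ S = r.toFinset} =
      cvpFiber B F '' {p | ∃ v, p = CVP B F v} := by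
  ext S
  constructor
  · rintro ⟨r, ⟨hr, hmax⟩, rfl⟩
    obtain ⟨v, hv⟩ := List.exists_mem_of_ne_nil r hr.1
    obtain ⟨r₀, hr₀, hr₀_eq⟩ := exists_isRPC_toFinset_eq_cvpFiber (B := B) (F := F) v
    have hsub : r.toFinset ⊆ r₀.toFinset := fun u hu =>
      hr₀_eq ▸ mem_cvpFiber.2 (hr.CVP_eq (List.mem_toFinset.1 hu) hv)
    exact ⟨_, ⟨v, rfl⟩, hr₀_eq ▸ hmax r₀ hr₀ hsub⟩
  · rintro ⟨_, ⟨v, rfl⟩, rfl⟩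
    obtain ⟨r₀, hr₀, hr₀_eq⟩ := exists_isRPC_toFinset_eq_cvpFiber (B := B) (F := F) v
    refine ⟨r₀, ⟨hr₀, fun r' hr' hsub => ?_⟩, hr₀_eq.symm⟩
    have hv : v ∈ r' := List.mem_toFinset.1 (hsub (hr₀_eq ▸ mem_cvpFiber.2 rfl))
    exact Finset.Subset.antisymm (fun u hu =>
      hr₀_eq ▸ mem_cvpFiber.2 (hr'.CVP_eq (List.mem_toFinset.1 hu) hv)) hsub

end RPC

theorem maximal_rpc_partition_general [DecidableEq V]
    {E : V → V → Prop} {c : V → V → ℝ} {s t : V}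
    (B : PredSPT E c s) (F : SuccSPT E c t)
    (Pi : Set (Finset V)) (hPi : Pi = {S | ∃ r, IsMaximalRPC B F r ∧ S = r.toFinset})
    (Lam : Set (List V)) (hLam : Lam = {p | ∃ v, p = CVP B F v}) :
    (∀ S ∈ Pi, S.Nonempty) ∧
    (∀ S₁ ∈ Pi, ∀ S₂ ∈ Pi, S₁ ≠ S₂ → Disjoint S₁ S₂) ∧
    (∀ v : V, ∃ S ∈ Pi, v ∈ S) ∧
    Pi.ncard = Lam.ncard := by
  rw [setOf_isMaximalRPC_toFinset_eq] at hPi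
  subst hPi hLam
  refine ⟨?_, ?_, fun v => ⟨_, ⟨_, ⟨v, rfl⟩, rfl⟩, mem_cvpFiber.2 rfl⟩, ?_⟩
  · rintro _ ⟨_, ⟨v, rfl⟩, rfl⟩
    exact ⟨v, mem_cvpFiber.2 rfl⟩
  · rintro _ ⟨p, -, rfl⟩ _ ⟨q, -, rfl⟩ hne
    exact Finset.disjoint_left.2 fun u hp hq =>
      hne (congrArg _ ((mem_cvpFiber.1 hp).symm.trans (mem_cvpFiber.1 hq)))
  · refine Set.InjOn.ncard_image ?_
    rintro _ ⟨v, rfl⟩ q - h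
    exact mem_cvpFiber.1 (h ▸ mem_cvpFiber.2 rfl)

/-- The vertex sets of the maximal RPCs partition `V` into pairwise
disjoint nonempty blocks, and the number of blocks equals `|Λ|`, the number of
distinct cascading via-paths. -/
theorem maximal_rpc_partition [Fintype V] [DecidableEq V]
    {E : V → V → Prop} {c : V → V → ℝ} {s t : V}
    (hc : ∀ u w, E u w → 0 ≤ c u w)
    (B : PredSPT E c s) (F : SuccSPT E c t)
    (Pi : Set (Finset V)) (hPi : Pi = {S | ∃ r, IsMaximalRPC B F r ∧ S = r.toFinset})
    (Lam : Set (List V)) (hLam : Lam = {p | ∃ v, p = CVP B F v}) :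
    (∀ S ∈ Pi, S.Nonempty) ∧
    (∀ S₁ ∈ Pi, ∀ S₂ ∈ Pi, S₁ ≠ S₂ → Disjoint S₁ S₂) ∧
    (∀ v : V, ∃ S ∈ Pi, v ∈ S) ∧
    Pi.ncard = Lam.ncard :=
  maximal_rpc_partition_general B F Pi hPi Lam hLam
end

section
/- If a vertex u lies on some shortest path from s to v or on some shortest path from v to t, then c(p_{s,u,t}) ≤ c(p_{s,v,t}), i.e., the minimum cost of an s–t path passing through u is at most the minimum cost of an s–t path passing through v. -/
variable {V : Type*}

variable {E : V → V → Prop} {c : V → V → ℝ} {s t : V}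

/-! Exchange argument: split an `s`–`t` path through `v` at `v` and replace its `s`–`v` part
(resp. its `v`–`t` part) by a shortest `s`–`v` (resp. `v`–`t`) path containing `u`. The result
is an `s`–`t` path through `u` that is no more expensive. Since `viaCost` is a real `sInf`, this
needs the sets of costs to be bounded below (by `0`) and, for `v`, nonempty. -/

lemma pathCost_cons_cons (x y : V) (l : List V) :
    pathCost c (x :: y :: l) = c x y + pathCost c (y :: l) := by
  simp [pathCost]

lemma pathCost_append_cons (l : List V) (v : V) (r : List V) :
    pathCost c (l ++ v :: r) = pathCost c (l ++ [v]) + pathCost c (v :: r) := by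
  induction l with
  | nil => simp [pathCost]
  | cons x l ih =>
    cases l with
    | nil => simp [pathCost]
    | cons y l =>
      simp only [List.cons_append, pathCost_cons_cons] at ih ⊢
      rw [ih, add_assoc]

lemma pathCost_nonneg (hc : ∀ u w, E u w → 0 ≤ c u w) {p : List V} (hp : p.IsChain E) :
    0 ≤ pathCost c p := by
  induction p with
  | nil => simp [pathCost]
  | cons x l ih =>
    cases l with
    | nil => simp [pathCost]
    | cons y l =>
      rw [List.isChain_cons_cons] at hp
      rw [pathCost_cons_cons]
      exact add_nonneg (hc _ _ hp.1) (ih hp.2)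

lemma isPath_append_cons_iff {l r : List V} {a b v : V} :
    IsPath E (l ++ v :: r) a b ↔ IsPath E (l ++ [v]) a v ∧ IsPath E (v :: r) v b := by
  have head_eq : (l ++ v :: r).head? = (l ++ [v]).head? := by cases l <;> rfl
  simp only [IsPath, List.Chain', head_eq, List.getLast?_append_cons]
  rw [List.isChain_split]
  simp only [ne_eq, List.append_eq_nil_iff, reduceCtorEq, and_false, not_false_eq_true,
    List.getLast?_singleton, List.head?_cons, true_and]
  tauto

lemma IsPath.exists_eq_append_singleton {p : List V} {a b : V} (hp : IsPath E p a b) :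
    ∃ p', p = p' ++ [b] :=
  ⟨p.dropLast, (List.dropLast_append_getLast? b hp.2.2.1).symm⟩

lemma IsPath.exists_eq_cons {p : List V} {a b : V} (hp : IsPath E p a b) :
    ∃ p', p = a :: p' :=
  ⟨p.tail, List.eq_cons_of_mem_head? hp.2.1⟩

section ViaCost

variable {u v : V}

lemma exists_isPath_through {p q : List V} (hp : IsPath E p s v) (hq : IsPath E q v t) :
    ∃ r, IsPath E r s t ∧ v ∈ r := by
  obtain ⟨p', rfl⟩ := hp.exists_eq_append_singleton
  obtain ⟨q', rfl⟩ := hq.exists_eq_cons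
  exact ⟨p' ++ v :: q', isPath_append_cons_iff.2 ⟨hp, hq⟩, by simp⟩

lemma viaCost_le_pathCost (hc : ∀ u w, E u w → 0 ≤ c u w) {q : List V}
    (hq : IsPath E q s t) (hu : u ∈ q) : viaCost E c s t u ≤ pathCost c q :=
  csInf_le ⟨0, by rintro _ ⟨p, ⟨hp, -⟩, rfl⟩; exact pathCost_nonneg hc hp.2.2.2⟩
    ⟨q, ⟨hq, hu⟩, rfl⟩

lemma le_viaCost {x : ℝ} (hne : ∃ q, IsPath E q s t ∧ v ∈ q)
    (h : ∀ q, IsPath E q s t → v ∈ q → x ≤ pathCost c q) : x ≤ viaCost E c s t v := by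
  obtain ⟨q, hq⟩ := hne
  exact le_csInf ⟨_, q, hq, rfl⟩ (by rintro _ ⟨p, ⟨hp, hvp⟩, rfl⟩; exact h p hp hvp)

lemma viaCost_le_of_mem_shortestPath_to (hc : ∀ u w, E u w → 0 ≤ c u w) {p l r : List V}
    (hp : IsShortestPath E c p s v) (hu : u ∈ p) (hq : IsPath E (l ++ v :: r) s t) :
    viaCost E c s t u ≤ pathCost c (l ++ v :: r) := by
  obtain ⟨hl, hr⟩ := isPath_append_cons_iff.1 hq
  obtain ⟨p', rfl⟩ := hp.1.exists_eq_append_singleton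
  calc viaCost E c s t u ≤ pathCost c (p' ++ v :: r) :=
        viaCost_le_pathCost hc (isPath_append_cons_iff.2 ⟨hp.1, hr⟩) (by simp at hu ⊢; tauto)
    _ ≤ pathCost c (l ++ v :: r) := by
        rw [pathCost_append_cons p', pathCost_append_cons l]
        linarith [hp.2 _ hl]

lemma viaCost_le_of_mem_shortestPath_from (hc : ∀ u w, E u w → 0 ≤ c u w) {p l r : List V}
    (hp : IsShortestPath E c p v t) (hu : u ∈ p) (hq : IsPath E (l ++ v :: r) s t) :
    viaCost E c s t u ≤ pathCost c (l ++ v :: r) := by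
  obtain ⟨hl, hr⟩ := isPath_append_cons_iff.1 hq
  obtain ⟨p', rfl⟩ := hp.1.exists_eq_cons
  calc viaCost E c s t u ≤ pathCost c (l ++ v :: p') :=
        viaCost_le_pathCost hc (isPath_append_cons_iff.2 ⟨hl, hp.1⟩) (by simp at hu ⊢; tauto)
    _ ≤ pathCost c (l ++ v :: r) := by
        rw [pathCost_append_cons l v p', pathCost_append_cons l v r]
        linarith [hp.2 _ hr]

end ViaCost

theorem via_cost_decreases_along_shortest_general
    {E : V → V → Prop} {c : V → V → ℝ} {s t : V}
    (hc : ∀ u w, E u w → 0 ≤ c u w)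
    (hreach : ∀ v : V, ∃ p, IsPath E p s v)
    (hcoreach : ∀ v : V, ∃ p, IsPath E p v t)
    (u v : V)
    (h : (∃ p, IsShortestPath E c p s v ∧ u ∈ p) ∨
         (∃ p, IsShortestPath E c p v t ∧ u ∈ p)) :
    viaCost E c s t u ≤ viaCost E c s t v := by
  obtain ⟨p₁, hp₁⟩ := hreach v
  obtain ⟨p₂, hp₂⟩ := hcoreach v
  refine le_viaCost (exists_isPath_through hp₁ hp₂) fun q hq hvq => ?_
  obtain ⟨l, r, rfl⟩ := List.append_of_mem hvq
  rcases h with ⟨p, hp, hup⟩ | ⟨p, hp, hup⟩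
  · exact viaCost_le_of_mem_shortestPath_to hc hp hup hq
  · exact viaCost_le_of_mem_shortestPath_from hc hp hup hq

/-- If a vertex `u` lies on some shortest path from `s` to `v` or
on some shortest path from `v` to `t`, then the minimum cost of an `s`–`t` path
passing through `u` is at most the minimum cost of an `s`–`t` path passing
through `v`. -/
theorem via_cost_decreases_along_shortest [Fintype V]
    {E : V → V → Prop} {c : V → V → ℝ} {s t : V}
    (hc : ∀ u w, E u w → 0 ≤ c u w)
    (hreach : ∀ v : V, ∃ p, IsPath E p s v)
    (hcoreach : ∀ v : V, ∃ p, IsPath E p v t)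
    (u v : V)
    (h : (∃ p, IsShortestPath E c p s v ∧ u ∈ p) ∨
         (∃ p, IsShortestPath E c p v t ∧ u ∈ p)) :
    viaCost E c s t u ≤ viaCost E c s t v :=
  via_cost_decreases_along_shortest_general hc hreach hcoreach u v h
end
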